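/- arXiv:1108.1658 — 9 statements merged into one kernel-verified Lean document; each statement's English description precedes it below -/
import Mathlib

section
/- An n×n array M with entries from {1,...,n} satisfies the property that whenever two elements appear together in a row they never appear together in a column (and vice versa) if and only if M is the Cayley table of a rectangular groupoid on {1,...,n}. -/
/-- A binary operation is rectangular if `a*b = c*d = x` implies `a*d = c*b = x`. -/
def IsRectangular {A : Type*} (op : A → A → A) : Prop :=
  ∀ a b c d x : A, op a b = x → op c d = x → op a d = x ∧ op c b = x

/-- Property P1 for a square array: if two elements appear together in some row and
together in some column, they must be equal. -/
def HasP1 {n : ℕ} (M : Fin n → Fin n → Fin n) : Prop :=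
  ∀ x y : Fin n,
    (∃ r j₁ j₂, M r j₁ = x ∧ M r j₂ = y) →
    (∃ c i₁ i₂, M i₁ c = x ∧ M i₂ c = y) → x = y

theorem isRectangular_iff {A : Type*} {op : A → A → A} :
    IsRectangular op ↔ ∀ a b c d, op a b = op c d → op a d = op a b := by
  refine ⟨fun h a b c d habcd => (h a b c d _ rfl habcd.symm).1, fun h a b c d x hab hcd => ?_⟩
  subst hab
  exact ⟨h a b c d hcd.symm, (h c d a b hcd).trans hcd⟩

theorem IsRectangular.apply_eq {A : Type*} {op : A → A → A} (h : IsRectangular op)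
    {a b c d x : A} (hab : op a b = x) (hcd : op c d = x) : op a d = x :=
  (h a b c d x hab hcd).1

/-- An `n × n` array with entries in `{1,…,n}` has property P1 iff it is the Cayley
table of a rectangular groupoid. -/
theorem array_P1_iff_rectangular {n : ℕ} (M : Fin n → Fin n → Fin n) :
    HasP1 M ↔ IsRectangular M := by
  constructor
  · -- `M a b` and `M a d` share row `a`, and column `d` through `M c d = M a b`.
    intro h
    exact isRectangular_iff.2 fun a b c d habcd =>
      (h _ _ ⟨a, b, d, rfl, rfl⟩ ⟨d, c, a, habcd.symm, rfl⟩).symm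
  · -- Both `x` and `y` must be the entry at the crossing of the shared row and column.
    rintro h x y ⟨r, j₁, j₂, hx, hy⟩ ⟨c, i₁, i₂, hx', hy'⟩
    exact (h.apply_eq hx hx').symm.trans (h.apply_eq hy hy')
end

section
/- For a groupoid (A,*), the implication 'a*b = c*d implies a*d = a*b for all a,b,c,d' suffices to show that (A,*) is rectangular, i.e., that a*b = c*d = x implies a*d = c*b = x. -/
/-- The implication `a*b = c*d → a*d = a*b` suffices for rectangularity. -/
theorem rectangular_of_weak_implication {A : Type*} (op : A → A → A)
    (h : ∀ a b c d : A, op a b = op c d → op a d = op a b) :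
    IsRectangular op := by
  rintro a b c d _ rfl hcd
  exact ⟨h a b c d hcd.symm, (h c d a b hcd).trans hcd⟩
end

section
/- If (N,*) is a rectangular groupoid, then the graphs (N,R) with R = {(a, a*b) : a,b ∈ N} and (N,G) with G = {(a*b, b) : a,b ∈ N} satisfy property P2: for every pair a,b ∈ N there is a unique node c with (a,c) ∈ R and (c,b) ∈ G. -/
theorem IsRectangular.op_eq_of_op_eq {N : Type*} {op : N → N → N} (h : IsRectangular op)
    {a b a' b' c : N} (hac : op a b' = c) (hcb : op a' b = c) : op a b = c :=
  (h a b' a' b c hac hcb).1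

/-- The graph pair associated with a rectangular groupoid satisfies P2. -/
theorem rectangular_graphs_P2 {N : Type*} (op : N → N → N) (h : IsRectangular op) :
    ∀ a b : N, ∃! c : N,
      (∃ a' b', (a, c) = (a', op a' b')) ∧ (∃ a' b', (c, b) = (op a' b', b')) := by
  intro a b
  refine ⟨op a b, ⟨⟨a, b, rfl⟩, ⟨a, b, rfl⟩⟩, ?_⟩
  rintro c ⟨⟨a₁, b₁, hR⟩, ⟨a₂, b₂, hG⟩⟩
  obtain ⟨rfl, hac⟩ := Prod.ext_iff.mp hR
  obtain ⟨hcb, rfl⟩ := Prod.ext_iff.mp hG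
  exact (h.op_eq_of_op_eq hac.symm hcb.symm).symm
end

section
/- If graphs (N,R),(N,G) satisfy P2 (unique red-green path between every ordered pair of nodes), then defining a*b to be the unique c with (a,c) ∈ R and (c,b) ∈ G makes (N,*) a rectangular groupoid. -/
theorem op_eq_iff_of_existsUnique {N : Type*} {R G : N → N → Prop}
    (hP2 : ∀ a b : N, ∃! c : N, R a c ∧ G c b)
    {op : N → N → N} (hop : ∀ a b : N, R a (op a b) ∧ G (op a b) b) {a b x : N} :
    op a b = x ↔ R a x ∧ G x b :=
  ⟨fun h => h ▸ hop a b, fun hx => (hP2 a b).unique (hop a b) hx⟩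

/-- If a graph pair satisfies P2, then the operation picking the unique middle node
of the red-green path is rectangular. -/
theorem groupoid_of_P2_rectangular {N : Type*} (R G : N → N → Prop)
    (hP2 : ∀ a b : N, ∃! c : N, R a c ∧ G c b)
    (op : N → N → N) (hop : ∀ a b : N, R a (op a b) ∧ G (op a b) b) :
    IsRectangular op := by
  have op_eq_iff {a b x : N} : op a b = x ↔ R a x ∧ G x b :=
    op_eq_iff_of_existsUnique hP2 hop
  intro a b c d x hab hcd
  obtain ⟨hRax, hGxb⟩ := op_eq_iff.mp hab
  obtain ⟨hRcx, hGxd⟩ := op_eq_iff.mp hcd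
  exact ⟨op_eq_iff.mpr ⟨hRax, hGxd⟩, op_eq_iff.mpr ⟨hRcx, hGxb⟩⟩
end

section
/- Let (A,*) be an associative rectangular groupoid. Then the set I = {x*y : x,y ∈ A} of all products is closed under *, every element of I is idempotent, and (I,*) satisfies the rectangular band identity a*(b*c) = a*c for all a,b,c ∈ I. -/
namespace IsRectangular

variable {A : Type*} {op : A → A → A}

theorem op_op_right (hrect : IsRectangular op)
    (hassoc : ∀ a b c : A, op (op a b) c = op a (op b c)) (a b c : A) :
    op a (op b c) = op a c :=
  ((hrect a (op b c) (op a b) c _ rfl (hassoc a b c)).1).symm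

theorem op_op_idem (hrect : IsRectangular op)
    (hassoc : ∀ a b c : A, op (op a b) c = op a (op b c)) (a b : A) :
    op (op a b) (op a b) = op a b :=
  calc op (op a b) (op a b) = op (op a b) b := hrect.op_op_right hassoc _ a b
    _ = op a (op b b) := hassoc a b b
    _ = op a b := hrect.op_op_right hassoc a b b

end IsRectangular

/-- In an associative rectangular groupoid, the set of all products is a
subsemigroup, all of whose elements are idempotent, and which satisfies the
rectangular band identity. -/
theorem associative_rectangular_band {A : Type*} (op : A → A → A)
    (hrect : IsRectangular op)
    (hassoc : ∀ a b c : A, op (op a b) c = op a (op b c)) :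
    (∀ x ∈ {z : A | ∃ a b, z = op a b}, ∀ y ∈ {z : A | ∃ a b, z = op a b},
        op x y ∈ {z : A | ∃ a b, z = op a b}) ∧
    (∀ x ∈ {z : A | ∃ a b, z = op a b}, op x x = x) ∧
    (∀ a ∈ {z : A | ∃ a b, z = op a b}, ∀ b ∈ {z : A | ∃ a b, z = op a b},
        ∀ c ∈ {z : A | ∃ a b, z = op a b}, op a (op b c) = op a c) := by
  refine ⟨fun x _ y _ => ⟨x, y, rfl⟩, ?_, fun a _ b _ c _ => hrect.op_op_right hassoc a b c⟩
  rintro x ⟨a, b, rfl⟩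
  exact hrect.op_op_idem hassoc a b
end

section
/- Let (N,*,+) be an algebra with two binary operations satisfying (a*b)+(b*c) = b and (a+b)*(b+c) = b for all a,b,c ∈ N. Then both (N,*) and (N,+) are rectangular groupoids. -/
/-! Absorption turns `a * b = x` into `a = (a * a) + x` and `c * d = x` into `d = x + (d * d)`,
so `a * d = ((a * a) + x) * (x + (d * d)) = x`. The two identities are exchanged by swapping
the operations, so the same argument applies to `+`. -/

section Absorption

variable {A : Type*} (mul add : A → A → A)
  (absorb_add : ∀ a b c : A, add (mul a b) (mul b c) = b)
  (absorb_mul : ∀ a b c : A, mul (add a b) (add b c) = b)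

include absorb_add absorb_mul in
theorem mul_eq_of_mul_eq_of_mul_eq {a b c d x : A} (hab : mul a b = x) (hcd : mul c d = x) :
    mul a d = x := by
  have ha : add (mul a a) x = a := hab ▸ absorb_add a a b
  have hd : add x (mul d d) = d := hcd ▸ absorb_add c d d
  rw [← ha, ← hd]
  exact absorb_mul _ _ _

include absorb_add absorb_mul in
theorem isRectangular_of_absorption : IsRectangular mul := fun _ _ _ _ _ hab hcd =>
  ⟨mul_eq_of_mul_eq_of_mul_eq mul add absorb_add absorb_mul hab hcd,
    mul_eq_of_mul_eq_of_mul_eq mul add absorb_add absorb_mul hcd hab⟩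

end Absorption

/-- If `(N,*,+)` satisfies `(a*b)+(b*c) = b` and `(a+b)*(b+c) = b`, then both
operations are rectangular. -/
theorem symmetric_algebra_rectangular {N : Type*} (star plus : N → N → N)
    (h1 : ∀ a b c : N, plus (star a b) (star b c) = b)
    (h2 : ∀ a b c : N, star (plus a b) (plus b c) = b) :
    IsRectangular star ∧ IsRectangular plus :=
  ⟨isRectangular_of_absorption star plus h1 h2, isRectangular_of_absorption plus star h2 h1⟩
end

section
/- Let (N,*,+) satisfy (a*b)+(b*c) = b and (a+b)*(b+c) = b for all a,b,c ∈ N. Then the edge sets R_* = {(a, a*b)} and G_+ = {(a+b, b)} coincide, and similarly G_* = {(a*b, b)} equals R_+ = {(a, a+b)}. -/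
/-!
An identity `g (f a b) (f b c) = b` exhibits every edge of one graph as an edge of the other:
`(a, f a b) = (g (f a a) (f a b), f a b)` and `(f a b, b) = (f a b, g (f a b) (f b b))`.
The two symmetry equations give these inclusions in both directions.
-/

namespace SymmetricAlgebra

variable {N : Type*}

def redGraph (f : N → N → N) : Set (N × N) := {p | ∃ a b, p = (a, f a b)}

def greenGraph (f : N → N → N) : Set (N × N) := {p | ∃ a b, p = (f a b, b)}

variable {f g : N → N → N}

theorem redGraph_subset_greenGraph (h : ∀ a b c, g (f a b) (f b c) = b) :
    redGraph f ⊆ greenGraph g := by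
  rintro _ ⟨a, b, rfl⟩
  exact ⟨f a a, f a b, by rw [h]⟩

theorem greenGraph_subset_redGraph (h : ∀ a b c, g (f a b) (f b c) = b) :
    greenGraph f ⊆ redGraph g := by
  rintro _ ⟨a, b, rfl⟩
  exact ⟨f a b, f b b, by rw [h]⟩

end SymmetricAlgebra

/-- For an algebra satisfying the two symmetry equations, the red graph of `*`
coincides with the green graph of `+`, and vice versa. -/
theorem symmetric_algebra_graphs {N : Type*} (star plus : N → N → N)
    (h1 : ∀ a b c : N, plus (star a b) (star b c) = b)
    (h2 : ∀ a b c : N, star (plus a b) (plus b c) = b) :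
    {p : N × N | ∃ a b, p = (a, star a b)} = {p : N × N | ∃ a b, p = (plus a b, b)} ∧
    {p : N × N | ∃ a b, p = (star a b, b)} = {p : N × N | ∃ a b, p = (a, plus a b)} :=
  ⟨(SymmetricAlgebra.redGraph_subset_greenGraph h1).antisymm
      (SymmetricAlgebra.greenGraph_subset_redGraph h2),
    (SymmetricAlgebra.greenGraph_subset_redGraph h1).antisymm
      (SymmetricAlgebra.redGraph_subset_greenGraph h2)⟩
end

section
/- Let (N,*) be a rectangular groupoid with associated graph pair R = {(a,a*b)} and G = {(a*b,b)}. Both R and G are symmetric relations (undirected graphs) if and only if (N,*) satisfies the identity (a*b)*(c*a) = a for all a,b,c. -/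
section

variable {N : Type*}

def graphR (op : N → N → N) : Set (N × N) := {q | ∃ a b, q = (a, op a b)}

def graphG (op : N → N → N) : Set (N × N) := {q | ∃ a b, q = (op a b, b)}

theorem swap_mem_graphR_iff (op : N → N → N) :
    (∀ p ∈ graphR op, (p.2, p.1) ∈ graphR op) ↔ ∀ a b, ∃ y, op (op a b) y = a := by
  constructor
  · intro hR a b
    obtain ⟨x, y, hxy⟩ := hR (a, op a b) ⟨a, b, rfl⟩
    obtain ⟨rfl, hy⟩ := Prod.mk.inj hxy
    exact ⟨y, hy.symm⟩
  · rintro hR _ ⟨a, b, rfl⟩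
    obtain ⟨y, hy⟩ := hR a b
    exact ⟨op a b, y, by rw [hy]⟩

theorem swap_mem_graphG_iff (op : N → N → N) :
    (∀ p ∈ graphG op, (p.2, p.1) ∈ graphG op) ↔ ∀ a b, ∃ x, op x (op a b) = b := by
  constructor
  · intro hG a b
    obtain ⟨x, y, hxy⟩ := hG (op a b, b) ⟨a, b, rfl⟩
    obtain ⟨hx, rfl⟩ := Prod.mk.inj hxy
    exact ⟨x, hx.symm⟩
  · rintro hG _ ⟨a, b, rfl⟩
    obtain ⟨x, hx⟩ := hG a b
    exact ⟨x, op a b, by rw [hx]⟩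

theorem IsRectangular.op_op_op_eq_left {op : N → N → N} (hrect : IsRectangular op)
    (hR : ∀ a b, ∃ y, op (op a b) y = a) (hG : ∀ a b, ∃ x, op x (op a b) = b) (a b c : N) :
    op (op a b) (op c a) = a := by
  obtain ⟨y, hy⟩ := hR a b
  obtain ⟨x, hx⟩ := hG c a
  exact (hrect _ _ _ _ a hy hx).1

end

/-- The graph pair of a rectangular groupoid is undirected iff the groupoid
satisfies `(a*b)*(c*a) = a`. -/
theorem undirected_iff_identity {N : Type*} (op : N → N → N)
    (hrect : IsRectangular op) :
    ((∀ p ∈ {q : N × N | ∃ a b, q = (a, op a b)}, (p.2, p.1) ∈ {q : N × N | ∃ a b, q = (a, op a b)}) ∧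
     (∀ p ∈ {q : N × N | ∃ a b, q = (op a b, b)}, (p.2, p.1) ∈ {q : N × N | ∃ a b, q = (op a b, b)}))
    ↔ (∀ a b c : N, op (op a b) (op c a) = a) := by
  change (∀ p ∈ graphR op, (p.2, p.1) ∈ graphR op) ∧ (∀ p ∈ graphG op, (p.2, p.1) ∈ graphG op) ↔ _
  rw [swap_mem_graphR_iff, swap_mem_graphG_iff]
  constructor
  · rintro ⟨hR, hG⟩
    exact hrect.op_op_op_eq_left hR hG
  · intro h
    exact ⟨fun a b => ⟨op a a, h a b a⟩, fun a b => ⟨op b b, h b b a⟩⟩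
end

section
/- Let A and B be disjoint rectangular groupoids and f : A → B, g : B → A maps. Define * on A ∪ B by: x*y = x*_A y if x,y ∈ A; x*y = x *_A g(y) if x ∈ A, y ∈ B; x*y = f(x) *_B y if x ∈ B, y ∈ A; x*y = x *_B y if x,y ∈ B. Then (A ∪ B, *) is a rectangular groupoid (the left split extension). -/
/-!
A product in the left split extension lies in the summand of its left factor, where it is that
summand's own product of the left factor with the right factor mapped into the summand.
So `a * b = c * d = x` forces `a`, `c` into the summand of `x`, where the claim is the
rectangularity of that summand.
-/

namespace Sum

variable {A B : Type*}

def leftSplitOp (opA : A → A → A) (opB : B → B → B) (p : A ⊕ B → A) (q : A ⊕ B → B) :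
    A ⊕ B → A ⊕ B → A ⊕ B
  | inl x, y => inl (opA x (p y))
  | inr x, y => inr (opB x (q y))

theorem isRectangular_leftSplitOp {opA : A → A → A} {opB : B → B → B}
    (hA : IsRectangular opA) (hB : IsRectangular opB) (p : A ⊕ B → A) (q : A ⊕ B → B) :
    IsRectangular (leftSplitOp opA opB p q) := by
  rintro (a | a) b (c | c) d (x | x) hab hcd <;>
    simp only [leftSplitOp, inl.injEq, inr.injEq, reduceCtorEq] at hab hcd ⊢
  · exact hA a (p b) c (p d) x hab hcd
  · exact hB a (q b) c (q d) x hab hcd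

end Sum

/-- The left split extension of two rectangular groupoids is rectangular. -/
theorem left_split_extension_rectangular {A B : Type*}
    (opA : A → A → A) (opB : B → B → B)
    (hA : IsRectangular opA) (hB : IsRectangular opB)
    (f : A → B) (g : B → A) :
    IsRectangular (fun x y : A ⊕ B =>
      match x, y with
      | Sum.inl x, Sum.inl y => Sum.inl (opA x y)
      | Sum.inl x, Sum.inr y => Sum.inl (opA x (g y))
      | Sum.inr x, Sum.inl y => Sum.inr (opB x (f y))
      | Sum.inr x, Sum.inr y => Sum.inr (opB x y)) := by
  convert Sum.isRectangular_leftSplitOp hA hB (Sum.elim id g) (Sum.elim f id) using 1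
  funext x y
  cases x <;> cases y <;> rfl
end
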